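/- arXiv:1911.02236 — 2 statements merged into one kernel-verified Lean document; each statement's English description precedes it below -/
import Mathlib

section
/- Let F be a number field, O_F its ring of integers, and n ≥ 1. Define Z₁ = {(x, I) ∈ F^× ⊕ Div(F) : nI = -div(x)} and B₁ = {(x^n, -div(x)) : x ∈ F^×}, where Div(F) is the group of fractional ideals and div(x) the principal fractional ideal of x. Then B₁ is a subgroup of Z₁, and the map Z₁/B₁ → Cl_F[n] sending (x, I) to the ideal class of I is a well-defined surjective group homomorphism with kernel isomorphic to O_F^×/(O_F^×)^n. -/
open NumberField
open scoped nonZeroDivisors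

variable (F : Type) [Field F] [NumberField F]

/-- The group `Div F` of fractional ideals of a number field `F` (written multiplicatively). -/
abbrev DivF := (FractionalIdeal (𝓞 F)⁰ F)ˣ

/-- `div : F^× → Div F`, sending `x` to the principal fractional ideal it generates. -/
noncomputable def divF : Fˣ →* DivF F := toPrincipalIdeal (𝓞 F) F

/-- The homomorphism `(x, I) ↦ I^n ⬝ div(x)`, whose kernel is
`Z₁ = {(x, I) : I^n = div(x)⁻¹}`. -/
noncomputable def z1Hom (n : ℕ) : Fˣ × DivF F →* DivF F :=
  ((powMonoidHom n).comp (MonoidHom.snd _ _)) * ((divF F).comp (MonoidHom.fst _ _))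

/-- `Z₁ = {(x, I) ∈ F^× ⊕ Div F : I^n = div(x)⁻¹}` (multiplicative notation for `nI = -div(x)`). -/
noncomputable def Z1 (n : ℕ) : Subgroup (Fˣ × DivF F) := (z1Hom F n).ker

/-- The homomorphism `x ↦ (x^n, div(x)⁻¹)`, whose range is `B₁`. -/
noncomputable def b1Hom (n : ℕ) : Fˣ →* Fˣ × DivF F :=
  (powMonoidHom n).prod (divF F)⁻¹

/-- `B₁ = {(x^n, div(x)⁻¹) : x ∈ F^×}`. -/
noncomputable def B1 (n : ℕ) : Subgroup (Fˣ × DivF F) := (b1Hom F n).range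

/-! Everything follows from the exactness of `1 → (𝓞 F)ˣ → Fˣ → Div F → Cl F → 1`. The class of
`I` for `(x, I) ∈ Z₁` is killed by `n` since `Iⁿ = div x⁻¹` is principal, and `B₁` maps to
principal classes. An `n`-torsion class `[I]` has `Iⁿ = div x`, so it comes from `(x⁻¹, I)`.
A pair `(x, div y)` is congruent modulo `B₁` to `(yⁿ x, 1)`, whose first entry is a unit, so the
units surject onto the kernel; a unit `u` becomes trivial iff `(u, 1) = (xⁿ, div x⁻¹)`, i.e. iff
`x` is a unit and `u = xⁿ`. -/

section FractionRing

variable {R K : Type*} [CommRing R] [IsDomain R] [Field K] [Algebra R K] [IsFractionRing R K]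

theorem toPrincipalIdeal_eq_one_iff {x : Kˣ} :
    toPrincipalIdeal R K x = 1 ↔ x ∈ (Units.map (algebraMap R K : R →* K)).range := by
  rw [toPrincipalIdeal_eq_iff, Units.val_one, ← FractionalIdeal.spanSingleton_one, eq_comm,
    FractionalIdeal.spanSingleton_eq_spanSingleton]
  simp [Units.ext_iff, Units.smul_def, Algebra.smul_def]

theorem ClassGroup.mk_eq_one_iff_mem_range {I : (FractionalIdeal R⁰ K)ˣ} :
    ClassGroup.mk K I = 1 ↔ I ∈ (toPrincipalIdeal R K).range := by
  rw [ClassGroup.mk_eq_one_iff, mem_principal_ideals_iff, FractionalIdeal.isPrincipal_iff]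
  simp [eq_comm]

end FractionRing

variable {F}

theorem divF_eq_one_iff {x : Fˣ} :
    divF F x = 1 ↔ x ∈ (Units.map (algebraMap (𝓞 F) F : 𝓞 F →* F)).range :=
  toPrincipalIdeal_eq_one_iff

theorem classGroup_mk_eq_one_iff {I : DivF F} : ClassGroup.mk F I = 1 ↔ I ∈ (divF F).range :=
  ClassGroup.mk_eq_one_iff_mem_range

theorem classGroup_mk_divF (x : Fˣ) : ClassGroup.mk F (divF F x) = 1 :=
  classGroup_mk_eq_one_iff.mpr ⟨x, rfl⟩

@[simp]
theorem b1Hom_apply {n : ℕ} (x : Fˣ) : b1Hom F n x = (x ^ n, (divF F x)⁻¹) := rfl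

theorem mem_Z1 {n : ℕ} {p : Fˣ × DivF F} : p ∈ Z1 F n ↔ p.2 ^ n * divF F p.1 = 1 := Iff.rfl

theorem B1_le_Z1 (n : ℕ) : B1 F n ≤ Z1 F n := by
  rintro _ ⟨x, rfl⟩
  simp [mem_Z1]

variable (F)

/-- `Z₁/B₁ ≅ H¹(Spec 𝓞 F, μₙ)`. -/
abbrev H1 (n : ℕ) := Z1 F n ⧸ (B1 F n).subgroupOf (Z1 F n)

noncomputable def z1ToClassGroup (n : ℕ) : Z1 F n →* ClassGroup (𝓞 F) :=
  (ClassGroup.mk F).comp ((MonoidHom.snd _ _).comp (Z1 F n).subtype)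

theorem B1_subgroupOf_le_ker_z1ToClassGroup (n : ℕ) :
    (B1 F n).subgroupOf (Z1 F n) ≤ (z1ToClassGroup F n).ker := by
  rintro z ⟨x, hx⟩
  rw [MonoidHom.mem_ker, z1ToClassGroup, MonoidHom.comp_apply, MonoidHom.comp_apply, ← hx]
  simp [classGroup_mk_divF]

noncomputable def h1ToClassGroup (n : ℕ) : H1 F n →* ClassGroup (𝓞 F) :=
  QuotientGroup.lift _ (z1ToClassGroup F n) (B1_subgroupOf_le_ker_z1ToClassGroup F n)

variable {F}

theorem h1ToClassGroup_mk {n : ℕ} (z : Z1 F n) :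
    h1ToClassGroup F n z = ClassGroup.mk F z.val.2 := rfl

theorem h1ToClassGroup_pow_eq_one {n : ℕ} (w : H1 F n) : h1ToClassGroup F n w ^ n = 1 := by
  induction w using QuotientGroup.induction_on with
  | H z =>
    have hz : z.val.2 ^ n = (divF F z.val.1)⁻¹ := eq_inv_of_mul_eq_one_left z.property
    rw [h1ToClassGroup_mk, ← map_pow, hz, map_inv, classGroup_mk_divF, inv_one]

theorem exists_h1ToClassGroup_eq {n : ℕ} {c : ClassGroup (𝓞 F)} (hc : c ^ n = 1) :
    ∃ w, h1ToClassGroup F n w = c := by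
  obtain ⟨I, rfl⟩ : ∃ I : DivF F, ClassGroup.mk F I = c :=
    ClassGroup.induction F (fun I ↦ ⟨I, rfl⟩) c
  rw [← map_pow, classGroup_mk_eq_one_iff] at hc
  obtain ⟨x, hx⟩ := hc
  have hz : (x⁻¹, I) ∈ Z1 F n := by
    rw [mem_Z1, map_inv, hx, mul_inv_cancel]
  exact ⟨(⟨(x⁻¹, I), hz⟩ : Z1 F n), rfl⟩

theorem units_mem_Z1 (n : ℕ) (u : (𝓞 F)ˣ) :
    (Units.map (algebraMap (𝓞 F) F : 𝓞 F →* F) u, 1) ∈ Z1 F n := by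
  rw [mem_Z1, one_pow, one_mul, divF_eq_one_iff]
  exact ⟨u, rfl⟩

variable (F)

noncomputable def unitsToZ1 (n : ℕ) : (𝓞 F)ˣ →* Z1 F n :=
  MonoidHom.codRestrict ((Units.map (algebraMap (𝓞 F) F : 𝓞 F →* F)).prod 1) (Z1 F n)
    (units_mem_Z1 n)

noncomputable def unitsToH1 (n : ℕ) : (𝓞 F)ˣ →* H1 F n :=
  (QuotientGroup.mk' _).comp (unitsToZ1 F n)

variable {F}

@[simp]
theorem coe_unitsToZ1 {n : ℕ} (u : (𝓞 F)ˣ) :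
    (unitsToZ1 F n u : Fˣ × DivF F) = (Units.map (algebraMap (𝓞 F) F : 𝓞 F →* F) u, 1) := rfl

theorem ker_unitsToH1 (n : ℕ) :
    (unitsToH1 F n).ker = (powMonoidHom n : (𝓞 F)ˣ →* (𝓞 F)ˣ).range := by
  ext u
  rw [MonoidHom.mem_ker, unitsToH1, MonoidHom.comp_apply, QuotientGroup.mk'_apply,
    QuotientGroup.eq_one_iff, Subgroup.mem_subgroupOf]
  constructor
  · rintro ⟨x, hx⟩
    obtain ⟨v, rfl⟩ := divF_eq_one_iff.mp (inv_eq_one.mp (congrArg Prod.snd hx))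
    refine ⟨v, Units.map_injective (FaithfulSMul.algebraMap_injective (𝓞 F) F) ?_⟩
    simpa using congrArg Prod.fst hx
  · rintro ⟨v, rfl⟩
    refine ⟨Units.map (algebraMap (𝓞 F) F : 𝓞 F →* F) v, ?_⟩
    simp [(divF_eq_one_iff (F := F)).mpr ⟨v, rfl⟩]

theorem range_unitsToH1 (n : ℕ) : (unitsToH1 F n).range = (h1ToClassGroup F n).ker := by
  ext w
  constructor
  · rintro ⟨u, rfl⟩
    simp [unitsToH1, h1ToClassGroup_mk]
  · intro hw
    obtain ⟨z, rfl⟩ := QuotientGroup.mk_surjective w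
    rw [MonoidHom.mem_ker, h1ToClassGroup_mk, classGroup_mk_eq_one_iff] at hw
    obtain ⟨y, hy⟩ := hw
    have hunit : divF F (y ^ n * z.val.1) = 1 := by
      rw [map_mul, map_pow, hy]
      exact z.property
    obtain ⟨u, hu⟩ := divF_eq_one_iff.mp hunit
    refine ⟨u, (QuotientGroup.eq (s := (B1 F n).subgroupOf (Z1 F n))).mpr ⟨y⁻¹, ?_⟩⟩
    ext <;> simp [hu, hy, mul_comm]

variable (F)

noncomputable def kerH1ToClassGroupEquiv (n : ℕ) :
    (h1ToClassGroup F n).ker ≃* (𝓞 F)ˣ ⧸ (powMonoidHom n : (𝓞 F)ˣ →* (𝓞 F)ˣ).range :=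
  ((MulEquiv.subgroupCongr (range_unitsToH1 n).symm).trans
    (QuotientGroup.quotientKerEquivRange (unitsToH1 F n)).symm).trans
    (QuotientGroup.quotientMulEquivOfEq (ker_unitsToH1 n))

theorem stmt_14 (n : ℕ) :
    B1 F n ≤ Z1 F n ∧
    ∃ f : (Z1 F n ⧸ (B1 F n).subgroupOf (Z1 F n)) →* ClassGroup (𝓞 F),
      (∀ z : Z1 F n, f (QuotientGroup.mk z) = ClassGroup.mk F z.val.2) ∧
      (∀ w, (f w) ^ n = 1) ∧
      (∀ c : ClassGroup (𝓞 F), c ^ n = 1 → ∃ w, f w = c) ∧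
      Nonempty (f.ker ≃* ((𝓞 F)ˣ ⧸ (powMonoidHom n : (𝓞 F)ˣ →* (𝓞 F)ˣ).range)) :=
  ⟨B1_le_Z1 n, h1ToClassGroup F n, h1ToClassGroup_mk, h1ToClassGroup_pow_eq_one,
    fun _ hc ↦ exists_h1ToClassGroup_eq hc, ⟨kerH1ToClassGroupEquiv F n⟩⟩
end

section
/- Let G, H be finite abelian groups, β : G → H and β' : G' → H' homomorphisms, and suppose given perfect pairings ⟨·,·⟩ : G' × H → ℚ/ℤ and ⟨·,·⟩' : G × H' → ℚ/ℤ satisfying the adjointness relation ⟨a, β(b)⟩ = ⟨b, β'(a)⟩' for all a ∈ G', b ∈ G. Then ∑_{(a,b) ∈ G' × G} exp(2πi⟨a, β(b)⟩) = ∑_{(a,b) ∈ G' × G} exp(2πi⟨b, β'(a)⟩'), and consequently |G'| · |ker β| = |G| · |ker β'|. -/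
/-- `exp(2πi x)` for `x ∈ ℚ/ℤ`. -/
noncomputable def e : AddCircle (1 : ℚ) → ℂ :=
  Quotient.lift (fun q : ℚ => Complex.exp (2 * Real.pi * Complex.I * (q : ℂ)))
    (fun a b h => by
      have h' : -a + b ∈ AddSubgroup.zmultiples (1 : ℚ) :=
        QuotientAddGroup.leftRel_apply.mp h
      obtain ⟨k, hk⟩ := AddSubgroup.mem_zmultiples_iff.mp h'
      have hb : b = a + (k : ℚ) := by
        have : (k : ℚ) = -a + b := by simpa using hk
        linarith
      have hb' : ((b : ℚ) : ℂ) = ((a : ℚ) : ℂ) + (k : ℂ) := by rw [hb]; push_cast; ring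
      simp only [hb', mul_add, Complex.exp_add]
      have h2 : Complex.exp (2 * (Real.pi : ℂ) * Complex.I * (k : ℂ)) = 1 := by
        simpa [mul_comm, mul_assoc, mul_left_comm] using Complex.exp_int_mul_two_pi_mul_I k
      rw [h2, mul_one])

lemma e_mk (q : ℚ) : e ((q : AddCircle (1:ℚ))) = Complex.exp (2 * Real.pi * Complex.I * (q : ℂ)) := rfl

lemma e_zero : e 0 = 1 := by
  have : (0 : AddCircle (1:ℚ)) = ((0:ℚ) : AddCircle (1:ℚ)) := rfl
  rw [this, e_mk]; simp

lemma e_add (x y : AddCircle (1:ℚ)) : e (x + y) = e x * e y := by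
  induction x using Quotient.inductionOn with
  | h a =>
    induction y using Quotient.inductionOn with
    | h b =>
      show e (((a + b : ℚ) : AddCircle (1:ℚ))) = _
      rw [e_mk]
      show _ = e ((a:AddCircle (1:ℚ))) * e ((b:AddCircle (1:ℚ)))
      rw [e_mk, e_mk, ← Complex.exp_add]
      push_cast; ring_nf

lemma e_eq_one {x : AddCircle (1:ℚ)} (h : e x = 1) : x = 0 := by
  induction x using Quotient.inductionOn with
  | h a =>
    rw [show (Quotient.mk _ a : AddCircle (1:ℚ)) = (a : AddCircle (1:ℚ)) from rfl, e_mk] at h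
    obtain ⟨n, hn⟩ := Complex.exp_eq_one_iff.mp h
    have hπ : (2 * (Real.pi:ℂ) * Complex.I) ≠ 0 := by
      have h1 := Complex.I_ne_zero
      have h2 : (Real.pi:ℂ) ≠ 0 := by exact_mod_cast Real.pi_ne_zero
      exact mul_ne_zero (mul_ne_zero two_ne_zero h2) h1
    have : (a : ℂ) = (n : ℂ) := by
      apply mul_left_cancel₀ hπ
      rw [hn]; ring
    have ha : a = (n : ℚ) := by exact_mod_cast this
    show (a : AddCircle (1:ℚ)) = 0
    rw [ha]
    exact (AddCircle.coe_eq_zero_iff _).mpr ⟨n, by simp⟩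

/-- The complex character attached to a homomorphism into `ℚ/ℤ`. -/
noncomputable def eChar {A : Type} [AddCommGroup A] (φ : A →+ AddCircle (1:ℚ)) :
    AddChar A ℂ where
  toFun a := e (φ a)
  map_zero_eq_one' := by simp [e_zero]
  map_add_eq_mul' a b := by simp [e_add]

lemma eChar_eq_zero_iff {A : Type} [AddCommGroup A] (φ : A →+ AddCircle (1:ℚ)) :
    eChar φ = 0 ↔ φ = 0 := by
  constructor
  · intro h
    ext a
    have : eChar φ a = 1 := by rw [h]; rfl
    exact e_eq_one this
  · intro h; ext a; subst h; show e 0 = 1; exact e_zero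

lemma char_sum {A : Type} [AddCommGroup A] [Fintype A] (φ : A →+ AddCircle (1:ℚ)) :
    ∑ a : A, e (φ a) = if φ = 0 then (Fintype.card A : ℂ) else 0 := by
  classical
  have := AddChar.sum_eq_ite (eChar φ)
  simp only [eChar_eq_zero_iff] at this
  exact this

theorem stmt_17 (G H G' H' : Type) [AddCommGroup G] [AddCommGroup H]
    [AddCommGroup G'] [AddCommGroup H'] [Fintype G] [Fintype H] [Fintype G'] [Fintype H']
    (β : G →+ H) (β' : G' →+ H')
    (p : G' →+ H →+ AddCircle (1 : ℚ))
    (hp1 : Function.Bijective (fun a : G' => p a))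
    (hp2 : Function.Bijective (fun h : H => p.flip h))
    (p' : G →+ H' →+ AddCircle (1 : ℚ))
    (hp'1 : Function.Bijective (fun b : G => p' b))
    (hp'2 : Function.Bijective (fun h : H' => p'.flip h))
    (hadj : ∀ (a : G') (b : G), p a (β b) = p' b (β' a)) :
    (∑ x : G' × G, e (p x.1 (β x.2)) = ∑ x : G' × G, e (p' x.2 (β' x.1))) ∧
    Nat.card G' * Nat.card β.ker = Nat.card G * Nat.card β'.ker := by
  classical
  have hsum : ∑ x : G' × G, e (p x.1 (β x.2)) = ∑ x : G' × G, e (p' x.2 (β' x.1)) :=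
    Finset.sum_congr rfl (fun x _ => by rw [hadj])
  refine ⟨hsum, ?_⟩
  -- left side evaluation
  have key : ∀ (A B C : Type) (_ : AddCommGroup A) (_ : AddCommGroup B) (_ : AddCommGroup C)
      (_ : Fintype A) (_ : Fintype B) (q : A →+ C →+ AddCircle (1:ℚ))
      (hq : Function.Injective (fun h : C => q.flip h)) (γ : B →+ C),
      ∑ x : A × B, e (q x.1 (γ x.2)) = (Fintype.card A : ℂ) * (Nat.card γ.ker : ℂ) := by
    intro A B C _ _ _ _ _ q hq γ
    rw [Fintype.sum_prod_type_right]
    have step : ∀ b : B, (∑ a : A, e (q a (γ b)))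
        = if γ b = 0 then (Fintype.card A : ℂ) else 0 := by
      intro b
      have : ∀ a : A, e (q a (γ b)) = e (q.flip (γ b) a) := fun a => rfl
      simp only [this]
      rw [char_sum (q.flip (γ b))]
      congr 1
      simp only [eq_iff_iff]
      constructor
      · intro h
        have : q.flip (γ b) = q.flip 0 := by rw [h]; simp
        exact hq this
      · intro h; rw [h]; simp
    simp only [step]
    rw [Finset.sum_ite, Finset.sum_const, Finset.sum_const_zero, add_zero]
    have hcard : (Finset.univ.filter (fun b : B => γ b = 0)).card = Nat.card γ.ker := by
      rw [Nat.card_eq_fintype_card, Fintype.card_subtype]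
      apply Finset.card_bij (fun b _ => b) (by simp [AddMonoidHom.mem_ker])
        (by simp) (fun b hb => ⟨b, by simpa [AddMonoidHom.mem_ker] using hb, rfl⟩)
    rw [hcard]
    push_cast
    ring
  have h1 := key G' G H ‹_› ‹_› ‹_› ‹_› ‹_› p hp2.injective β
  have h2 := key G G' H' ‹_› ‹_› ‹_› ‹_› ‹_› p' hp'2.injective β'
  rw [h1] at hsum
  rw [show ∑ x : G' × G, e (p' x.2 (β' x.1)) = ∑ x : G × G', e (p' x.1 (β' x.2)) from
    Fintype.sum_equiv (Equiv.prodComm _ _) _ _ (fun x => rfl), h2] at hsum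
  have : ((Fintype.card G' * Nat.card β.ker : ℕ) : ℂ) = ((Fintype.card G * Nat.card β'.ker : ℕ) : ℂ) := by
    push_cast; linear_combination hsum
  have h3 : Fintype.card G' * Nat.card β.ker = Fintype.card G * Nat.card β'.ker :=
    Nat.cast_injective this
  simpa [Nat.card_eq_fintype_card] using h3
end
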